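/- arXiv:2306.11828 — 2 statements merged into one kernel-verified Lean document; each statement's English description precedes it below -/
import Mathlib

section
/- Let x be a fractional matching in a graph G=(V,E) with dyadic rational entries x_e = Σ_{i=0}^{L} (x_e)_i·2^{−i}, let E_i := supp_i(x) for 0 ≤ i ≤ L, let F_L := ∅, and let F_0, …, F_{L−1} ⊆ E be such that for every 1 ≤ i ≤ L and every vertex v, the number of edges of F_{i−1} incident to v is at most ⌈(d_{E_i}(v) + d_{F_i}(v))/2⌉, where d_S(v) denotes the number of edges of S incident to v. Then x^{(i)}(v) ≤ 1 for every vertex v and every 0 ≤ i ≤ L; in particular, E_0 and F_0 are disjoint and E_0 ∪ F_0 is a matching in G. -/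
open Finset

variable {V : Type*} [Fintype V] [DecidableEq V]

/-- The fractional degree `x(v) := Σ_{e ∋ v} x_e` of a vertex `v` under `x`. -/
noncomputable def fracDeg (x : Sym2 V → ℝ) (v : V) : ℝ :=
  ∑ e : Sym2 V, if v ∈ e then x e else 0

/-- Degree of `v` in a finite set of edges. -/
def fdeg (S : Finset (Sym2 V)) (v : V) : ℕ :=
  (S.filter (fun e => v ∈ e)).card

/-- `x^{(i)}_e := 1[e ∈ F_i]·2^{−i} + Σ_{j=0}^{i} 1[e ∈ E_j]·2^{−j}`. -/
noncomputable def xvec (E F : ℕ → Finset (Sym2 V)) (i : ℕ) : Sym2 V → ℝ := fun e =>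
  (if e ∈ F i then ((2 : ℝ) ^ i)⁻¹ else 0) +
    ∑ j ∈ Finset.range (i + 1), if e ∈ E j then ((2 : ℝ) ^ j)⁻¹ else 0

/-- A matching: a set of pairwise vertex-disjoint (non-loop) edges. -/
def IsMatchingSet {V : Type*} (M : Finset (Sym2 V)) : Prop :=
  (∀ e ∈ M, ¬ e.IsDiag) ∧ ∀ e ∈ M, ∀ f ∈ M, e ≠ f → ∀ v : V, v ∈ e → v ∉ f

lemma sum_ind (S : Finset (Sym2 V)) (v : V) (c : ℝ) :
    ∑ e : Sym2 V, (if v ∈ e then (if e ∈ S then c else 0) else 0)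
      = (fdeg S v : ℝ) * c := by
  have h : ∀ e : Sym2 V, (if v ∈ e then (if e ∈ S then c else 0) else 0)
      = if e ∈ S.filter (fun e => v ∈ e) then c else 0 := by
    intro e
    by_cases h1 : v ∈ e <;> by_cases h2 : e ∈ S <;> simp [h1, h2]
  rw [Finset.sum_congr rfl (fun e _ => h e)]
  rw [Finset.sum_ite_mem, Finset.univ_inter, Finset.sum_const, fdeg]
  simp [mul_comm]

/-- Let `x` be a fractional matching in `G = (V,E)` with dyadic entries
`x_e = Σ_{i=0}^{L} (x_e)_i·2^{−i}`, let `E_i := supp_i(x)`, `F_L := ∅`, and let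
`F_0, …, F_{L−1} ⊆ E` be such that for every `1 ≤ i ≤ L` and every vertex `v`,
`d_{F_{i−1}}(v) ≤ ⌈(d_{E_i}(v) + d_{F_i}(v))/2⌉`.  Then `x^{(i)}(v) ≤ 1` for every vertex `v`
and every `0 ≤ i ≤ L`; in particular `E_0` and `F_0` are disjoint and `E_0 ∪ F_0` is a
matching in `G`. -/
theorem stmt_7 (G : SimpleGraph V) (x : Sym2 V → ℝ)
    (hxnn : ∀ e, 0 ≤ x e)
    (hsupp : ∀ e, x e ≠ 0 → e ∈ G.edgeSet)
    (hfm : ∀ v, fracDeg x v ≤ 1)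
    (L : ℕ) (d : Sym2 V → ℕ → ℕ) (hd : ∀ e i, d e i ≤ 1)
    (hx : ∀ e, x e = ∑ i ∈ Finset.range (L + 1), (d e i : ℝ) / 2 ^ i)
    (E F : ℕ → Finset (Sym2 V))
    (hE : ∀ i, E i = Finset.univ.filter (fun e => d e i = 1))
    (hFsub : ∀ i, ∀ e ∈ F i, e ∈ G.edgeSet)
    (hFL : F L = ∅)
    (hF : ∀ i, 1 ≤ i → i ≤ L → ∀ v : V,
      fdeg (F (i - 1)) v ≤ (fdeg (E i) v + fdeg (F i) v + 1) / 2) :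
    (∀ v : V, ∀ i ≤ L, fracDeg (xvec E F i) v ≤ 1) ∧
      Disjoint (E 0) (F 0) ∧ IsMatchingSet (E 0 ∪ F 0) := by
  -- indicator identity for dyadic digits
  have hind : ∀ (j : ℕ) (e : Sym2 V), (d e j : ℝ) / 2 ^ j
      = if e ∈ E j then ((2:ℝ)^j)⁻¹ else 0 := by
    intro j e
    have hde := hd e j
    have : d e j = 0 ∨ d e j = 1 := by omega
    rcases this with h | h <;> simp [hE j, h, one_div]
  -- expansion of fracDeg x
  have hfrx : ∀ v, fracDeg x v
      = ∑ j ∈ Finset.range (L+1), (fdeg (E j) v : ℝ) * ((2:ℝ)^j)⁻¹ := by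
    intro v
    rw [fracDeg]
    have h : ∀ e : Sym2 V, (if v ∈ e then x e else 0)
        = ∑ j ∈ Finset.range (L+1),
            (if v ∈ e then (if e ∈ E j then ((2:ℝ)^j)⁻¹ else 0) else 0) := by
      intro e
      by_cases h1 : v ∈ e
      · simp only [h1, if_true]
        rw [hx e]
        exact Finset.sum_congr rfl (fun j _ => hind j e)
      · simp [h1]
    rw [Finset.sum_congr rfl (fun e _ => h e), Finset.sum_comm]
    exact Finset.sum_congr rfl (fun j _ => sum_ind _ _ _)
  -- expansion of fracDeg (xvec E F i)
  have hfrxv : ∀ i v, fracDeg (xvec E F i) v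
      = (fdeg (F i) v : ℝ) * ((2:ℝ)^i)⁻¹
        + ∑ j ∈ Finset.range (i+1), (fdeg (E j) v : ℝ) * ((2:ℝ)^j)⁻¹ := by
    intro i v
    rw [fracDeg]
    have h : ∀ e : Sym2 V, (if v ∈ e then xvec E F i e else 0)
        = (if v ∈ e then (if e ∈ F i then ((2:ℝ)^i)⁻¹ else 0) else 0)
          + ∑ j ∈ Finset.range (i+1),
              (if v ∈ e then (if e ∈ E j then ((2:ℝ)^j)⁻¹ else 0) else 0) := by
      intro e
      by_cases h1 : v ∈ e <;> simp [xvec, h1]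
    rw [Finset.sum_congr rfl (fun e _ => h e), Finset.sum_add_distrib, sum_ind,
      Finset.sum_comm]
    congr 1
    exact Finset.sum_congr rfl (fun j _ => sum_ind _ _ _)
  -- the key integer bound, by downward induction
  have key : ∀ k, k ≤ L → ∀ v : V,
      fdeg (F (L-k)) v + ∑ j ∈ Finset.range (L-k+1), fdeg (E j) v * 2^(L-k-j)
        ≤ 2^(L-k) := by
    intro k
    induction k with
    | zero =>
      intro _ v
      simp only [Nat.sub_zero]
      have h1 : fdeg (F L) v = 0 := by simp [fdeg, hFL]
      rw [h1, zero_add]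
      have hfr := hfm v
      rw [hfrx v] at hfr
      have hcast : ((∑ j ∈ Finset.range (L+1), fdeg (E j) v * 2^(L-j) : ℕ) : ℝ)
          ≤ ((2^L : ℕ) : ℝ) := by
        push_cast
        calc ∑ j ∈ Finset.range (L+1), (fdeg (E j) v : ℝ) * 2^(L-j)
            = (∑ j ∈ Finset.range (L+1), (fdeg (E j) v : ℝ) * ((2:ℝ)^j)⁻¹) * 2^L := by
              rw [Finset.sum_mul]
              refine Finset.sum_congr rfl fun j hj => ?_
              rw [Finset.mem_range] at hj
              rw [mul_assoc]
              congr 1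
              rw [inv_mul_eq_div, eq_div_iff (by positivity), ← pow_add]
              congr 1
              omega
          _ ≤ 1 * 2^L := by
              apply mul_le_mul_of_nonneg_right hfr (by positivity)
          _ = 2^L := one_mul _
      exact_mod_cast hcast
    | succ k ih =>
      intro hk v
      set i := L - (k+1) with hidef
      have hi1 : i + 1 = L - k := by omega
      have hstep := hF (i+1) (by omega) (by omega) v
      have ihv := ih (by omega) v
      rw [← hi1] at ihv
      rw [Finset.sum_range_succ] at ihv
      have hsum2 : ∑ j ∈ Finset.range (i+1), fdeg (E j) v * 2^(i+1-j)
          = 2 * ∑ j ∈ Finset.range (i+1), fdeg (E j) v * 2^(i-j) := by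
        rw [Finset.mul_sum]
        refine Finset.sum_congr rfl fun j hj => ?_
        rw [Finset.mem_range] at hj
        rw [show i+1-j = (i-j)+1 by omega, pow_succ]
        ring
      rw [hsum2] at ihv
      simp only [Nat.sub_self, pow_zero, mul_one] at ihv
      have hFi : fdeg (F i) v ≤ (fdeg (E (i+1)) v + fdeg (F (i+1)) v + 1)/2 := hstep
      have h2i : (2:ℕ)^(i+1) = 2 * 2^i := by rw [pow_succ]; ring
      rw [h2i] at ihv
      omega
  -- the main bound
  have main : ∀ v : V, ∀ i ≤ L, fracDeg (xvec E F i) v ≤ 1 := by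
    intro v i hiL
    have hkey := key (L - i) (by omega) v
    rw [show L - (L-i) = i by omega] at hkey
    rw [hfrxv]
    have hc : ((fdeg (F i) v + ∑ j ∈ Finset.range (i+1), fdeg (E j) v * 2^(i-j) : ℕ) : ℝ)
        ≤ ((2^i : ℕ) : ℝ) := Nat.cast_le.mpr hkey
    push_cast at hc
    have heq : (fdeg (F i) v : ℝ) * ((2:ℝ)^i)⁻¹
        + ∑ j ∈ Finset.range (i+1), (fdeg (E j) v : ℝ) * ((2:ℝ)^j)⁻¹
        = ((fdeg (F i) v : ℝ)
          + ∑ j ∈ Finset.range (i+1), (fdeg (E j) v : ℝ) * 2^(i-j)) / 2^i := by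
      rw [add_div, Finset.sum_div, div_eq_mul_inv]
      congr 1
      refine Finset.sum_congr rfl fun j hj => ?_
      rw [Finset.mem_range] at hj
      rw [mul_div_assoc]
      congr 1
      rw [eq_div_iff (by positivity), inv_mul_eq_div, div_eq_iff (by positivity), ← pow_add]
      congr 1
      omega
    rw [heq, div_le_one (by positivity)]
    calc (fdeg (F i) v : ℝ)
          + ∑ j ∈ Finset.range (i+1), (fdeg (E j) v : ℝ) * 2^(i-j) ≤ (2:ℝ)^i := hc
      _ = 2^i := rfl
  -- the bound at level 0
  have g0 : ∀ v : V, fdeg (F 0) v + fdeg (E 0) v ≤ 1 := by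
    intro v
    have h := key L (le_refl L) v
    rw [Nat.sub_self] at h
    simpa using h
  -- disjointness
  have hdisj : Disjoint (E 0) (F 0) := by
    rw [Finset.disjoint_left]
    intro e heE heF
    induction e using Sym2.ind with
    | _ u w =>
      have h1 : 0 < fdeg (E 0) u :=
        Finset.card_pos.mpr ⟨s(u,w), Finset.mem_filter.mpr ⟨heE, by simp⟩⟩
      have h2 : 0 < fdeg (F 0) u :=
        Finset.card_pos.mpr ⟨s(u,w), Finset.mem_filter.mpr ⟨heF, by simp⟩⟩
      have := g0 u
      omega
  refine ⟨main, hdisj, ?_, ?_⟩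
  · intro e he
    rw [Finset.mem_union] at he
    rcases he with he | he
    · have hd0 : d e 0 = 1 := by
        rw [hE 0] at he
        simpa using (Finset.mem_filter.mp he).2
      have hxe : (1:ℝ) ≤ x e := by
        rw [hx e]
        have hs := Finset.single_le_sum (f := fun i => (d e i : ℝ)/2^i)
          (fun i _ => by positivity) (Finset.mem_range.mpr (Nat.succ_pos L))
        simpa [hd0] using hs
      have hmem : e ∈ G.edgeSet := hsupp e (by intro h; rw [h] at hxe; norm_num at hxe)
      exact G.not_isDiag_of_mem_edgeSet hmem
    · exact G.not_isDiag_of_mem_edgeSet (hFsub 0 e he)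
  · intro e he f hf hef v hv hvf
    have hsubs : ({e, f} : Finset (Sym2 V)) ⊆ (E 0 ∪ F 0).filter (fun g => v ∈ g) := by
      intro g hg
      rcases Finset.mem_insert.mp hg with rfl | hg
      · exact Finset.mem_filter.mpr ⟨he, hv⟩
      · rw [Finset.mem_singleton] at hg
        subst hg
        exact Finset.mem_filter.mpr ⟨hf, hvf⟩
    have hcard : 2 ≤ fdeg (E 0 ∪ F 0) v := by
      calc 2 = ({e, f} : Finset (Sym2 V)).card := (Finset.card_pair hef).symm
        _ ≤ _ := Finset.card_le_card hsubs
    have hle : fdeg (E 0 ∪ F 0) v ≤ fdeg (E 0) v + fdeg (F 0) v := by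
      rw [fdeg, fdeg, fdeg, Finset.filter_union]
      exact Finset.card_union_le _ _
    have := g0 v
    omega
end

section
/- Let x ∈ ℝ_{≥0}^E have dyadic rational entries x_e = Σ_{i=0}^{L} (x_e)_i·2^{−i}, let E_i := supp_i(x) for 0 ≤ i ≤ L, let F_L := ∅, and let F_0, …, F_{L−1} ⊆ E be such that for every 0 ≤ i ≤ L−1 and every vertex v, |d_{F_i}(v) − (d_{E_{i+1}}(v) + d_{F_{i+1}}(v))/2| ≤ 1, where d_S(v) denotes the number of edges of S incident to v. Then for every vertex v and every 0 ≤ i ≤ L, |x^{(i)}(v) − x(v)| ≤ 2^{−i+1}; consequently d^{2^{−i+1}}_V(x, x^{(i)}) = 0. -/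
open Finset

variable {V : Type*} [Fintype V] [DecidableEq V]

/-- `d^ε_V(x,y) := Σ_{v∈V} max(|x(v) − y(v)| − ε, 0)`. -/
noncomputable def dV (ε : ℝ) (x y : Sym2 V → ℝ) : ℝ :=
  ∑ v : V, max (|fracDeg x v - fracDeg y v| - ε) 0

/- Proof idea: with `F_L = ∅` the vector `x^{(L)}` is `x` itself, and
`x^{(i)}(v) − x^{(i+1)}(v) = 2^{−i}·(d_{F_i}(v) − (d_{E_{i+1}}(v) + d_{F_{i+1}}(v))/2)`,
so the hypothesis bounds each consecutive difference by `2^{−i}`; summing the geometric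
series from `i` to `L − 1` gives `|x^{(i)}(v) − x(v)| ≤ 2^{−i+1}`. -/

lemma fracDeg_eq_sum_filter (x : Sym2 V → ℝ) (v : V) :
    fracDeg x v = ∑ e ∈ univ.filter (v ∈ ·), x e :=
  (sum_filter _ _).symm

lemma fracDeg_add (f g : Sym2 V → ℝ) (v : V) :
    fracDeg (fun e => f e + g e) v = fracDeg f v + fracDeg g v := by
  simp only [fracDeg_eq_sum_filter, sum_add_distrib]

lemma fracDeg_sum {ι : Type*} (s : Finset ι) (f : ι → Sym2 V → ℝ) (v : V) :
    fracDeg (fun e => ∑ j ∈ s, f j e) v = ∑ j ∈ s, fracDeg (f j) v := by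
  simp only [fracDeg_eq_sum_filter]
  exact sum_comm

lemma fracDeg_ite_mem (S : Finset (Sym2 V)) (c : ℝ) (v : V) :
    fracDeg (fun e => if e ∈ S then c else 0) v = fdeg S v * c := by
  rw [fracDeg_eq_sum_filter, sum_ite_mem, sum_const, nsmul_eq_mul, fdeg, filter_inter,
    univ_inter]

lemma dV_eq_zero_of_abs_le {ε : ℝ} {x y : Sym2 V → ℝ}
    (h : ∀ v, |fracDeg x v - fracDeg y v| ≤ ε) : dV ε x y = 0 :=
  sum_eq_zero fun v _ => max_eq_right (sub_nonpos.mpr (h v))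

lemma fracDeg_xvec (E F : ℕ → Finset (Sym2 V)) (i : ℕ) (v : V) :
    fracDeg (xvec E F i) v =
      fdeg (F i) v * ((2 : ℝ) ^ i)⁻¹ + ∑ j ∈ range (i + 1), fdeg (E j) v * ((2 : ℝ) ^ j)⁻¹ := by
  unfold xvec
  simp only [fracDeg_add, fracDeg_sum, fracDeg_ite_mem]

lemma fracDeg_xvec_sub_succ (E F : ℕ → Finset (Sym2 V)) (i : ℕ) (v : V) :
    fracDeg (xvec E F i) v - fracDeg (xvec E F (i + 1)) v =
      ((2 : ℝ) ^ i)⁻¹ *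
        (fdeg (F i) v - ((fdeg (E (i + 1)) v : ℝ) + fdeg (F (i + 1)) v) / 2) := by
  rw [fracDeg_xvec, fracDeg_xvec, sum_range_succ _ (i + 1), pow_succ]
  field_simp
  ring

lemma xvec_eq_of_digits (x : Sym2 V → ℝ) (L : ℕ) (d : Sym2 V → ℕ → ℕ)
    (hd : ∀ e i, d e i ≤ 1)
    (hx : ∀ e, x e = ∑ i ∈ range (L + 1), (d e i : ℝ) / 2 ^ i)
    (E F : ℕ → Finset (Sym2 V))
    (hE : ∀ i, E i = univ.filter (fun e => d e i = 1)) (hFL : F L = ∅) :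
    xvec E F L = x := by
  funext e
  rw [hx, xvec, hFL, if_neg (notMem_empty e), zero_add]
  refine sum_congr rfl fun j _ => ?_
  rw [hE]
  rcases Nat.le_one_iff_eq_zero_or_eq_one.mp (hd e j) with h | h <;> simp [h]

lemma abs_sub_le_of_abs_sub_succ_le_inv_two_pow {a : ℕ → ℝ} {i L : ℕ} (hiL : i ≤ L)
    (h : ∀ j, i ≤ j → j < L → |a j - a (j + 1)| ≤ ((2 : ℝ) ^ j)⁻¹) :
    |a i - a L| ≤ 2 / 2 ^ i - 2 / 2 ^ L := by
  induction L, hiL using Nat.le_induction with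
  | base => simp
  | succ L hiL ih =>
    have hstep := h L hiL L.lt_succ_self
    calc |a i - a (L + 1)| ≤ |a i - a L| + |a L - a (L + 1)| := abs_sub_le _ _ _
      _ ≤ 2 / 2 ^ i - 2 / 2 ^ L + ((2 : ℝ) ^ L)⁻¹ :=
        add_le_add (ih fun j hij hjL => h j hij (hjL.trans L.lt_succ_self)) hstep
      _ = 2 / 2 ^ i - 2 / 2 ^ (L + 1) := by rw [pow_succ]; field_simp; ring

/-- Let `x ∈ ℝ_{≥0}^E` have dyadic entries `x_e = Σ_{i=0}^{L} (x_e)_i·2^{−i}`, let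
`E_i := supp_i(x)`, `F_L := ∅`, and let `F_0, …, F_{L−1}` be such that for every
`0 ≤ i ≤ L−1` and every vertex `v`,
`|d_{F_i}(v) − (d_{E_{i+1}}(v) + d_{F_{i+1}}(v))/2| ≤ 1`.  Then for every vertex `v` and
every `0 ≤ i ≤ L`, `|x^{(i)}(v) − x(v)| ≤ 2^{−i+1}`; consequently
`d^{2^{−i+1}}_V(x, x^{(i)}) = 0`. -/
theorem stmt_8 (x : Sym2 V → ℝ) (L : ℕ) (d : Sym2 V → ℕ → ℕ)
    (hd : ∀ e i, d e i ≤ 1)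
    (hx : ∀ e, x e = ∑ i ∈ Finset.range (L + 1), (d e i : ℝ) / 2 ^ i)
    (E F : ℕ → Finset (Sym2 V))
    (hE : ∀ i, E i = Finset.univ.filter (fun e => d e i = 1))
    (hFL : F L = ∅)
    (hF : ∀ i, i < L → ∀ v : V,
      |(fdeg (F i) v : ℝ) - ((fdeg (E (i + 1)) v : ℝ) + (fdeg (F (i + 1)) v : ℝ)) / 2| ≤ 1) :
    ∀ i ≤ L,
      (∀ v : V, |fracDeg (xvec E F i) v - fracDeg x v| ≤ 2 / 2 ^ i) ∧
      dV (2 / 2 ^ i) x (xvec E F i) = 0 := by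
  intro i hiL
  have hbound (v : V) : |fracDeg (xvec E F i) v - fracDeg x v| ≤ 2 / 2 ^ i := by
    rw [← xvec_eq_of_digits x L d hd hx E F hE hFL]
    have hstep (j : ℕ) (_ : i ≤ j) (hjL : j < L) :
        |fracDeg (xvec E F j) v - fracDeg (xvec E F (j + 1)) v| ≤ ((2 : ℝ) ^ j)⁻¹ := by
      rw [fracDeg_xvec_sub_succ, abs_mul, abs_of_pos (by positivity)]
      exact mul_le_of_le_one_right (by positivity) (hF j hjL v)
    have hpos : (0 : ℝ) ≤ 2 / 2 ^ L := by positivity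
    linarith [abs_sub_le_of_abs_sub_succ_le_inv_two_pow hiL hstep]
  exact ⟨hbound, dV_eq_zero_of_abs_le fun v => abs_sub_comm (fracDeg x v) _ ▸ hbound v⟩
end
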